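/- arXiv:1601.02338 — 2 statements merged into one kernel-verified Lean document; each statement's English description precedes it below -/
import Mathlib

section
/- Let F : 𝔻 → 𝔻 be holomorphic on the open unit disc with a = F(0). Then for all z ∈ 𝔻: |F(z) − ((1 − |z|²)/(1 − |z|²|a|²))·a| ≤ |z|·(1 − |a|²)/(1 − |z|²·|a|²). -/
/-!
Composing `F` with the disc automorphism `u ↦ (u - a) / (1 - ā u)` gives a self-map of the disc
fixing `0`, so the Schwarz lemma yields `|F z - a| ≤ |z| |1 - ā F z|`. For `r = |z|` the set
`{w : |w - a| ≤ r |1 - ā w|}` is the closed disc bounded by an Apollonius circle, and completing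
the square shows its centre is `(1 - r²) a / (1 - r² |a|²)` and its radius
`r (1 - |a|²) / (1 - r² |a|²)`.
-/

open Metric Set Complex ComplexConjugate

lemma normSq_one_sub_conj_mul_sub_normSq_sub (a u : ℂ) :
    normSq (1 - conj a * u) - normSq (u - a) = (1 - normSq a) * (1 - normSq u) := by
  simp only [normSq_apply, sub_re, sub_im, mul_re, mul_im, conj_re, conj_im, one_re, one_im]
  ring

noncomputable def blaschkeFactor (a u : ℂ) : ℂ := (u - a) / (1 - conj a * u)

section blaschkeFactor

variable {a u : ℂ}

@[simp]
lemma blaschkeFactor_self (a : ℂ) : blaschkeFactor a a = 0 := by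
  simp [blaschkeFactor]

lemma normSq_sub_lt_normSq_one_sub_conj_mul (ha : ‖a‖ < 1) (hu : ‖u‖ < 1) :
    normSq (u - a) < normSq (1 - conj a * u) := by
  have hpos : 0 < (1 - normSq a) * (1 - normSq u) := by
    rw [← Complex.sq_norm, ← Complex.sq_norm]
    exact mul_pos (by nlinarith [norm_nonneg a]) (by nlinarith [norm_nonneg u])
  linarith [normSq_one_sub_conj_mul_sub_normSq_sub a u]

lemma one_sub_conj_mul_ne_zero (ha : ‖a‖ < 1) (hu : ‖u‖ < 1) : 1 - conj a * u ≠ 0 := by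
  rw [← normSq_pos]
  exact (normSq_nonneg _).trans_lt (normSq_sub_lt_normSq_one_sub_conj_mul ha hu)

lemma norm_blaschkeFactor_lt_one (ha : ‖a‖ < 1) (hu : ‖u‖ < 1) : ‖blaschkeFactor a u‖ < 1 := by
  rw [← sq_lt_one_iff₀ (norm_nonneg _), Complex.sq_norm, blaschkeFactor, normSq_div,
    div_lt_one (normSq_pos.mpr (one_sub_conj_mul_ne_zero ha hu))]
  exact normSq_sub_lt_normSq_one_sub_conj_mul ha hu

lemma differentiableOn_blaschkeFactor (ha : ‖a‖ < 1) :
    DifferentiableOn ℂ (blaschkeFactor a) (ball 0 1) :=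
  DifferentiableOn.div (by fun_prop) (by fun_prop) fun _ hu ↦
    one_sub_conj_mul_ne_zero ha (mem_ball_zero_iff.mp hu)

end blaschkeFactor

theorem norm_sub_le_mul_norm_one_sub_conj_mul {F : ℂ → ℂ}
    (hF : DifferentiableOn ℂ F (ball 0 1)) (hmaps : MapsTo F (ball 0 1) (ball 0 1))
    {z : ℂ} (hz : z ∈ ball 0 1) :
    ‖F z - F 0‖ ≤ ‖z‖ * ‖1 - conj (F 0) * F z‖ := by
  have hF0 : ‖F 0‖ < 1 := mem_ball_zero_iff.mp (hmaps (mem_ball_self one_pos))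
  have hFz : ‖F z‖ < 1 := mem_ball_zero_iff.mp (hmaps hz)
  have hmaps' : MapsTo (blaschkeFactor (F 0) ∘ F) (ball 0 1) (closedBall 0 1) := fun u hu ↦
    mem_closedBall_zero_iff.mpr
      (norm_blaschkeFactor_lt_one hF0 (mem_ball_zero_iff.mp (hmaps hu))).le
  have hschwarz : ‖blaschkeFactor (F 0) (F z)‖ ≤ ‖z‖ :=
    Complex.norm_le_norm_of_mapsTo_ball
      ((differentiableOn_blaschkeFactor hF0).comp hF hmaps) hmaps'
      (blaschkeFactor_self _) (mem_ball_zero_iff.mp hz)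
  rwa [blaschkeFactor, norm_div,
    div_le_iff₀ (norm_pos_iff.mpr (one_sub_conj_mul_ne_zero hF0 hFz))] at hschwarz

-- Completing the square for the Apollonius disc, with the denominator `1 - r² |a|²` cleared.
lemma normSq_smul_sub_smul_sub (a w : ℂ) (r : ℝ) :
    normSq ((1 - r ^ 2 * normSq a : ℝ) • w - (1 - r ^ 2 : ℝ) • a) - (r * (1 - normSq a)) ^ 2 =
      (1 - r ^ 2 * normSq a) * (normSq (w - a) - r ^ 2 * normSq (1 - conj a * w)) := by
  simp only [normSq_apply, sub_re, sub_im, mul_re, mul_im, conj_re, conj_im, one_re, one_im,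
    real_smul, ofReal_re, ofReal_im]
  ring

theorem norm_sub_smul_le_of_norm_sub_le_mul {a w : ℂ} {r : ℝ} (hr : 0 ≤ r) (ha : ‖a‖ ≤ 1)
    (hra : r * ‖a‖ < 1) (h : ‖w - a‖ ≤ r * ‖1 - conj a * w‖) :
    ‖w - ((1 - r ^ 2) / (1 - r ^ 2 * ‖a‖ ^ 2) : ℝ) • a‖ ≤
      r * (1 - ‖a‖ ^ 2) / (1 - r ^ 2 * ‖a‖ ^ 2) := by
  have hD : 0 < 1 - r ^ 2 * ‖a‖ ^ 2 := by nlinarith [mul_nonneg hr (norm_nonneg a)]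
  have hrhs : 0 ≤ r * (1 - ‖a‖ ^ 2) := mul_nonneg hr (by nlinarith [norm_nonneg a])
  have hsq : ‖w - a‖ ^ 2 ≤ r ^ 2 * ‖1 - conj a * w‖ ^ 2 := by
    rw [← mul_pow]; exact pow_le_pow_left₀ (norm_nonneg _) h 2
  have hkey := normSq_smul_sub_smul_sub a w r
  rw [← Complex.sq_norm, ← Complex.sq_norm, ← Complex.sq_norm, ← Complex.sq_norm] at hkey
  have hscaled : w - ((1 - r ^ 2) / (1 - r ^ 2 * ‖a‖ ^ 2) : ℝ) • a =
      (1 - r ^ 2 * ‖a‖ ^ 2)⁻¹ • ((1 - r ^ 2 * ‖a‖ ^ 2 : ℝ) • w - (1 - r ^ 2 : ℝ) • a) := by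
    rw [smul_sub, smul_smul, smul_smul, inv_mul_cancel₀ hD.ne', one_smul, div_eq_inv_mul]
  rw [hscaled, norm_smul, Real.norm_of_nonneg (inv_nonneg.mpr hD.le), inv_mul_eq_div,
    div_le_div_iff_of_pos_right hD]
  refine le_of_sq_le_sq ?_ hrhs
  nlinarith

theorem stmt_6 (F : ℂ → ℂ) (hF : DifferentiableOn ℂ F (ball 0 1))
    (hmaps : MapsTo F (ball (0 : ℂ) 1) (ball (0 : ℂ) 1))
    (a : ℂ) (ha : F 0 = a) :
    ∀ z ∈ ball (0 : ℂ) 1,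
      ‖F z - ((1 - ‖z‖ ^ 2) / (1 - ‖z‖ ^ 2 * ‖a‖ ^ 2) : ℝ) • a‖ ≤
        ‖z‖ * (1 - ‖a‖ ^ 2) / (1 - ‖z‖ ^ 2 * ‖a‖ ^ 2) := by
  intro z hz
  subst ha
  have hF0 : ‖F 0‖ < 1 := mem_ball_zero_iff.mp (hmaps (mem_ball_self one_pos))
  have hz1 : ‖z‖ < 1 := mem_ball_zero_iff.mp hz
  exact norm_sub_smul_le_of_norm_sub_le_mul (norm_nonneg z) hF0.le
    (mul_lt_one_of_nonneg_of_lt_one_left (norm_nonneg z) hz1 hF0.le)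
    (norm_sub_le_mul_norm_one_sub_conj_mul hF hmaps hz)
end

section
/- Let F : 𝔻 → 𝔻 be holomorphic with F(0) = 0 and F′(0) = α ∈ (0, 1). Set r₀ = α/(1 + √(1 − α²)). Then for every r with 0 < r ≤ r₀, the image F(B(0, r)) contains the open disc B(0, R(r)), where R(r) = r·(α − r)/(1 − α·r); moreover R(r) ≥ r·r₀. -/
/-!
Write `F z = z g(z)` with `g = dslope F 0`. By the Schwarz lemma and the maximum principle `g` maps
the disc into itself with `g 0 = α`, so Schwarz–Pick gives `|g z - α| ≤ |z| |1 - α g z|`, which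
forces `|g z| ≥ (α - |z|) / (1 - α |z|)`. Hence `|F| ≥ R(r)` on the circle `|z| = r`; since `F` is
an open map and `F 0 = 0`, the connected disc `B(0, R(r))` meets `F(B(0, r))` and cannot leave it
without crossing the image of that circle.
-/

open Metric Set
open ComplexConjugate

namespace Complex

theorem normSq_one_sub_conj_mul_sub_normSq_sub (a w : ℂ) :
    normSq (1 - conj a * w) - normSq (w - a) = (1 - normSq a) * (1 - normSq w) := by
  rw [normSq_sub, normSq_sub]
  simp only [normSq_conj, normSq_one, map_mul, conj_conj, one_mul, conj_re, conj_im, mul_re]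
  ring

theorem norm_sub_lt_norm_one_sub_conj_mul {a w : ℂ} (ha : ‖a‖ < 1) (hw : ‖w‖ < 1) :
    ‖w - a‖ < ‖1 - conj a * w‖ := by
  have ha' : normSq a < 1 := by rw [normSq_eq_norm_sq]; nlinarith [norm_nonneg a]
  have hw' : normSq w < 1 := by rw [normSq_eq_norm_sq]; nlinarith [norm_nonneg w]
  have key := normSq_one_sub_conj_mul_sub_normSq_sub a w
  rw [normSq_eq_norm_sq, normSq_eq_norm_sq] at key
  have : ‖w - a‖ ^ 2 < ‖1 - conj a * w‖ ^ 2 := by nlinarith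
  exact lt_of_pow_lt_pow_left₀ 2 (norm_nonneg _) this

theorem div_le_norm_of_norm_sub_le_mul_norm_one_sub_conj_mul {a u : ℂ} {t : ℝ} (ha : ‖a‖ ≤ 1)
    (ht₀ : 0 ≤ t) (ht₁ : t ≤ 1) (h : ‖u - a‖ ≤ t * ‖1 - conj a * u‖) :
    (‖a‖ - t) / (1 - ‖a‖ * t) ≤ ‖u‖ := by
  rcases le_or_gt ‖a‖ t with hta | hta
  · exact (div_nonpos_of_nonpos_of_nonneg (by linarith) (by nlinarith)).trans (norm_nonneg u)
  set A := ‖a‖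
  set s := ‖u‖
  have hx : (conj a * u).re ≤ A * s := by
    calc (conj a * u).re ≤ ‖conj a * u‖ := re_le_norm _
      _ = A * s := by rw [norm_mul, norm_conj]
  have hnorm_sub : ‖u - a‖ ^ 2 = s ^ 2 + A ^ 2 - 2 * (conj a * u).re := by
    rw [← normSq_eq_norm_sq, normSq_sub, normSq_eq_norm_sq, normSq_eq_norm_sq, mul_comm u]
  have hnorm_one_sub : ‖1 - conj a * u‖ ^ 2 = 1 + A ^ 2 * s ^ 2 - 2 * (conj a * u).re := by
    rw [← normSq_eq_norm_sq, normSq_sub, normSq_one, map_mul, normSq_conj, normSq_eq_norm_sq,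
      normSq_eq_norm_sq, one_mul, conj_re]
  have hsq : ‖u - a‖ ^ 2 ≤ t ^ 2 * ‖1 - conj a * u‖ ^ 2 := by
    rw [← mul_pow]; exact pow_le_pow_left₀ (norm_nonneg _) h 2
  rw [hnorm_sub, hnorm_one_sub] at hsq
  -- `s` lies between the roots `(A - t) / (1 - A t) ≤ (A + t) / (1 + A t)` of this quadratic
  have hquad : ((1 - A * t) * s - (A - t)) * ((1 + A * t) * s - (A + t)) ≤ 0 := by
    nlinarith [mul_le_mul_of_nonneg_left hx (by nlinarith : (0:ℝ) ≤ 2 * (1 - t ^ 2))]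
  rw [div_le_iff₀ (by nlinarith)]
  have hAt : A * t < 1 := by nlinarith
  by_contra! hlt
  have hneg : (1 + A * t) * s - (A + t) < 0 := by
    have : (1 + A * t) * (s * (1 - A * t)) < (A + t) * (1 - A * t) := by
      nlinarith [mul_lt_mul_of_pos_left hlt (by nlinarith : (0:ℝ) < 1 + A * t),
        mul_nonneg ht₀ (by nlinarith [norm_nonneg a] : (0:ℝ) ≤ 1 - A ^ 2)]
    nlinarith
  nlinarith

theorem mapsTo_ball_div_one_sub_conj_mul {a : ℂ} (ha : ‖a‖ < 1) :
    MapsTo (fun w => (w - a) / (1 - conj a * w)) (ball 0 1) (ball 0 1) := by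
  intro w hw
  rw [mem_ball_zero_iff] at hw ⊢
  have hlt := norm_sub_lt_norm_one_sub_conj_mul ha hw
  rw [norm_div, div_lt_one ((norm_nonneg _).trans_lt hlt)]
  exact hlt

theorem differentiableOn_div_one_sub_conj_mul {a : ℂ} (ha : ‖a‖ < 1) :
    DifferentiableOn ℂ (fun w => (w - a) / (1 - conj a * w)) (ball 0 1) := by
  refine (differentiableOn_id.sub_const a).div
    ((differentiableOn_const 1).sub (differentiableOn_id.const_mul _)) fun w hw => ?_
  rw [← norm_pos_iff]
  exact (norm_nonneg _).trans_lt (norm_sub_lt_norm_one_sub_conj_mul ha (mem_ball_zero_iff.mp hw))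

/-- Schwarz–Pick at the origin. -/
theorem norm_sub_le_mul_norm_one_sub_conj_mul_of_mapsTo_ball {f : ℂ → ℂ}
    (hf : DifferentiableOn ℂ f (ball 0 1)) (hmaps : MapsTo f (ball 0 1) (ball 0 1)) {z : ℂ}
    (hz : z ∈ ball 0 1) : ‖f z - f 0‖ ≤ ‖z‖ * ‖1 - conj (f 0) * f z‖ := by
  set a := f 0
  have ha : ‖a‖ < 1 := mem_ball_zero_iff.mp (hmaps (mem_ball_self one_pos))
  set φ : ℂ → ℂ := fun w => (w - a) / (1 - conj a * w)
  have hφf : MapsTo (φ ∘ f) (ball 0 1) (ball 0 1) :=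
    (mapsTo_ball_div_one_sub_conj_mul ha).comp hmaps
  have hschwarz : ‖φ (f z)‖ ≤ ‖z‖ :=
    norm_le_norm_of_mapsTo_ball ((differentiableOn_div_one_sub_conj_mul ha).comp hf hmaps)
      (hφf.mono_right ball_subset_closedBall) (by simp [a]) (mem_ball_zero_iff.mp hz)
  have hden : 0 < ‖1 - conj a * f z‖ := (norm_nonneg _).trans_lt
    (norm_sub_lt_norm_one_sub_conj_mul ha (mem_ball_zero_iff.mp (hmaps hz)))
  simp only [φ, norm_div, div_le_iff₀ hden] at hschwarz
  exact hschwarz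

theorem mapsTo_ball_of_mapsTo_closedBall {E F : Type*} [NormedAddCommGroup E] [NormedSpace ℂ E]
    [NormedAddCommGroup F] [NormedSpace ℂ F] {f : E → F} {U : Set E} {c : E} {R : ℝ}
    (hU : IsPreconnected U) (ho : IsOpen U) (hd : DifferentiableOn ℂ f U)
    (hmaps : MapsTo f U (closedBall 0 R)) (hc : c ∈ U) (hlt : ‖f c‖ < R) :
    MapsTo f U (ball 0 R) := by
  intro z hz
  rw [mem_ball_zero_iff]
  by_contra! hge
  have hmax : IsMaxOn (norm ∘ f) U z := fun w hw =>
    (mem_closedBall_zero_iff.mp (hmaps hw)).trans hge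
  have := norm_eqOn_of_isPreconnected_of_isMaxOn hU ho hd hz hmax hc
  simp only [Function.comp_apply, Function.const_apply] at this
  linarith

theorem mul_div_le_norm_of_mapsTo_ball {F : ℂ → ℂ} (hF : DifferentiableOn ℂ F (ball 0 1))
    (hmaps : MapsTo F (ball 0 1) (ball 0 1)) (h0 : F 0 = 0) (hd : ‖deriv F 0‖ < 1) {z : ℂ}
    (hz : z ∈ ball 0 1) :
    ‖z‖ * (‖deriv F 0‖ - ‖z‖) / (1 - ‖deriv F 0‖ * ‖z‖) ≤ ‖F z‖ := by
  set g := dslope F 0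
  have hg : DifferentiableOn ℂ g (ball 0 1) :=
    (differentiableOn_dslope (isOpen_ball.mem_nhds (mem_ball_self one_pos))).mpr hF
  have hg0 : g 0 = deriv F 0 := dslope_same F 0
  have hg_closed : MapsTo g (ball 0 1) (closedBall 0 1) := fun w hw => by
    simpa using norm_dslope_le_div_of_mapsTo_ball hF
      (by simpa [h0] using hmaps.mono_right ball_subset_closedBall) hw
  have hg_open : MapsTo g (ball 0 1) (ball 0 1) :=
    mapsTo_ball_of_mapsTo_closedBall (convex_ball 0 1).isPreconnected isOpen_ball hg hg_closed
      (mem_ball_self one_pos) (hg0 ▸ hd)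
  have hpick := norm_sub_le_mul_norm_one_sub_conj_mul_of_mapsTo_ball hg hg_open hz
  rw [hg0] at hpick
  have hlower := div_le_norm_of_norm_sub_le_mul_norm_one_sub_conj_mul hd.le (norm_nonneg z)
    (mem_ball_zero_iff.mp hz).le hpick
  have hFz : F z = z * g z := by simpa [h0] using (sub_smul_dslope F 0 z).symm
  rw [hFz, norm_mul, mul_div_assoc]
  exact mul_le_mul_of_nonneg_left hlower (norm_nonneg z)

theorem isOpen_image_of_deriv_ne_zero {f : ℂ → ℂ} {U V : Set ℂ} (hf : DifferentiableOn ℂ f U)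
    (hU : IsOpen U) (hUc : IsPreconnected U) {c : ℂ} (hc : c ∈ U) (hdc : deriv f c ≠ 0)
    (hVU : V ⊆ U) (hV : IsOpen V) : IsOpen (f '' V) := by
  rcases (hf.analyticOnNhd hU).is_constant_or_isOpen hUc with ⟨w, hw⟩ | hopen
  · have hconst : f =ᶠ[nhds c] fun _ => w := Filter.eventually_of_mem (hU.mem_nhds hc) hw
    exact absurd (by rw [hconst.deriv_eq, deriv_const]) hdc
  · exact hopen V hVU hV

end Complex

theorem ball_subset_image_ball_of_le_dist_sphere {E F : Type*} [PseudoMetricSpace E]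
    [ProperSpace E] [NormedAddCommGroup F] [NormedSpace ℝ F] {f : E → F} {c : E} {r ρ : ℝ}
    (hr : 0 < r) (hf : ContinuousOn f (closedBall c r)) (hopen : IsOpen (f '' ball c r))
    (hsphere : ∀ z ∈ sphere c r, ρ ≤ dist (f z) (f c)) : ball (f c) ρ ⊆ f '' ball c r := by
  rcases le_or_gt ρ 0 with hρ | hρ
  · simp [ball_eq_empty.mpr hρ]
  refine (convex_ball (f c) ρ).isPreconnected.subset_of_closure_inter_subset hopen
    ⟨f c, mem_ball_self hρ, c, mem_ball_self hr, rfl⟩ ?_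
  rintro w ⟨hw, hwρ⟩
  have hclosure : closure (f '' ball c r) ⊆ f '' closedBall c r :=
    closure_minimal (image_mono ball_subset_closedBall)
      ((isCompact_closedBall c r).image_of_continuousOn hf).isClosed
  obtain ⟨z, hz, rfl⟩ := hclosure hw
  refine ⟨z, (mem_closedBall.mp hz).lt_of_ne fun hzr => ?_, rfl⟩
  exact (hsphere z hzr).not_gt (mem_ball.mp hwρ)

/-- `α / (1 + √(1 - α²))` is the fixed point of `r ↦ (α - r) / (1 - α r)`, which is decreasing. -/
theorem div_one_add_sqrt_le_sub_div {α r : ℝ} (hα0 : 0 ≤ α) (hα1 : α < 1)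
    (hr : r ≤ α / (1 + √(1 - α ^ 2))) :
    α / (1 + √(1 - α ^ 2)) ≤ (α - r) / (1 - α * r) := by
  set s := √(1 - α ^ 2)
  set r₀ := α / (1 + s)
  have hs0 : 0 ≤ s := Real.sqrt_nonneg _
  have hs2 : s ^ 2 = 1 - α ^ 2 := Real.sq_sqrt (by nlinarith)
  have hr₀α : r₀ ≤ α := div_le_self hα0 (by linarith)
  have hfix : α - r₀ = r₀ * (1 - α * r₀) := by
    simp only [r₀]
    field_simp
    linear_combination α * hs2
  have hαr : 0 < 1 - α * r := by nlinarith
  rw [le_div_iff₀ hαr]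
  nlinarith [mul_le_mul_of_nonneg_right hr (by nlinarith : (0:ℝ) ≤ 1 - α * r₀)]

theorem stmt_11 (F : ℂ → ℂ) (hF : DifferentiableOn ℂ F (ball 0 1))
    (hmaps : MapsTo F (ball (0 : ℂ) 1) (ball (0 : ℂ) 1))
    (α : ℝ) (hα0 : 0 < α) (hα1 : α < 1)
    (h0 : F 0 = 0) (hd : deriv F 0 = (α : ℂ)) :
    ∀ r : ℝ, 0 < r → r ≤ α / (1 + Real.sqrt (1 - α ^ 2)) →
      ball (0 : ℂ) (r * (α - r) / (1 - α * r)) ⊆ F '' ball 0 r ∧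
        r * (α / (1 + Real.sqrt (1 - α ^ 2))) ≤ r * (α - r) / (1 - α * r) := by
  intro r hr hrr₀
  have hnorm_d : ‖deriv F 0‖ = α := by rw [hd, Complex.norm_real, Real.norm_of_nonneg hα0.le]
  have hr₁ : r < 1 := hrr₀.trans_lt ((div_le_self hα0.le (by simp)).trans_lt hα1)
  refine ⟨?_, ?_⟩
  · have hopen : IsOpen (F '' ball 0 r) :=
      Complex.isOpen_image_of_deriv_ne_zero hF isOpen_ball (convex_ball 0 1).isPreconnected
        (mem_ball_self one_pos) (by rw [hd]; exact_mod_cast hα0.ne') (ball_subset_ball hr₁.le)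
        isOpen_ball
    have hsphere : ∀ z ∈ sphere (0 : ℂ) r, r * (α - r) / (1 - α * r) ≤ dist (F z) (F 0) := by
      intro z hz
      have hzr : ‖z‖ = r := mem_sphere_zero_iff_norm.mp hz
      have hlower := Complex.mul_div_le_norm_of_mapsTo_ball hF hmaps h0 (hnorm_d ▸ hα1)
        (mem_ball_zero_iff.mpr (hzr ▸ hr₁))
      rwa [hnorm_d, hzr, ← dist_zero_right, ← h0] at hlower
    simpa [h0] using ball_subset_image_ball_of_le_dist_sphere hr
      (hF.continuousOn.mono (closedBall_subset_ball hr₁)) hopen hsphere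
  · rw [mul_div_assoc]
    exact mul_le_mul_of_nonneg_left (div_one_add_sqrt_le_sub_div hα0.le hα1 hrr₀) hr.le
end
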